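/- Let K be a field with an additive valuation v : K → ℝ ∪ {∞}. Let n ≥ 2, let α_1,…,α_n ∈ K with v(α_i) = A_i, ordered by indices i_1,…,i_n so that A_{i_1} < A_{i_2} < ⋯ < A_{i_n}. Fix 1 ≤ p ≤ n−1 and let b, c ∈ K satisfy (b−α_1)⋯(b−α_n) = (c−α_1)⋯(c−α_n), v(b) = A_{i_p}, and v(c) = X_c with A_{i_p} < X_c < A_{i_{p+1}}. Define B_j = (b−α_j)/(c−α_j) for j = 1,…,n. Then v(B_{i_j}) = 0 for j = 1,…,p−1; v(B_{i_p}) = (n−p)·(X_c − A_{i_p}); and v(B_{i_j}) = A_{i_p} − X_c for j = p+1,…,n. In particular Σ_{j=1}^n v(B_{i_j}) = 0. -/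

import Mathlib

/-!
Comparing valuations in the ultrametric inequality determines `v (b - α i)` and `v (c - α i)`
for every `i` except `v (b - α (σ p))`. Since `∏ B_j = 1`, the valuations of the `B_j` sum to
zero, and this determines the one that is left.
-/

open Finset

theorem Fin.apply_eq_of_sum_eq_zero {n : ℕ} {f : Fin n → WithTop ℝ} {p : Fin n} {a : ℝ}
    (hsum : ∑ j, f j = 0) (hlt : ∀ j < p, f j = 0) (hgt : ∀ j, p < j → f j = a) :
    f p = ↑(((n : ℝ) - p - 1) * -a) := by
  have hrest : ∑ j ∈ univ.erase p, f j = ↑((n - 1 - p) • a) := by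
    rw [← sum_subset (s₁ := Ioi p) (fun j hj ↦ mem_erase.2 ⟨(mem_Ioi.1 hj).ne', mem_univ j⟩)
      fun j hj hj' ↦ hlt j (lt_of_le_of_ne (not_lt.1 (mt mem_Ioi.2 hj')) (mem_erase.1 hj).1),
      sum_congr rfl fun j hj ↦ hgt j (mem_Ioi.1 hj), Finset.sum_const, Fin.card_Ioi,
      WithTop.coe_nsmul]
  rw [← add_sum_erase _ _ (mem_univ p), hrest] at hsum
  have hcast : ((n - 1 - p : ℕ) : ℝ) = n - p - 1 := by
    rw [Nat.sub_sub, Nat.cast_sub (by omega)]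
    push_cast
    ring
  rw [← LinearOrderedAddCommGroupWithTop.add_neg_cancel_right_of_ne_top WithTop.coe_ne_top (f p),
    hsum, zero_add, ← WithTop.LinearOrderedAddCommGroup.coe_neg, nsmul_eq_mul, hcast, mul_neg]

namespace AddValuation

variable {R K Γ₀ ι : Type*}

theorem map_prod [CommRing R] [LinearOrderedAddCommMonoidWithTop Γ₀] (v : AddValuation R Γ₀)
    (s : Finset ι) (f : ι → R) : v (∏ i ∈ s, f i) = ∑ i ∈ s, v (f i) := by
  classical
  induction s using Finset.induction_on with
  | empty => simp
  | insert i s hi ih => rw [prod_insert hi, sum_insert hi, map_mul, ih]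

theorem sum_map_div_eq_zero [Field K] [LinearOrderedAddCommGroupWithTop Γ₀]
    (v : AddValuation K Γ₀) {s : Finset ι} {f g : ι → K} (hg : ∀ i ∈ s, g i ≠ 0)
    (h : ∏ i ∈ s, f i = ∏ i ∈ s, g i) : ∑ i ∈ s, v (f i / g i) = 0 := by
  rw [← map_prod, prod_div_distrib, h, div_self (prod_ne_zero_iff.2 hg), map_one]

/-- On a field `v 1 = 0` is forced by `v 1 = v 1 + v 1` and `v 1 ≠ ⊤`. -/
def ofField [Field K] [LinearOrderedAddCommMonoidWithTop Γ₀] (v : K → Γ₀)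
    (hv_top : ∀ x, v x = ⊤ ↔ x = 0) (hv_mul : ∀ x y, v (x * y) = v x + v y)
    (hv_add : ∀ x y, min (v x) (v y) ≤ v (x + y)) : AddValuation K Γ₀ :=
  of v ((hv_top 0).2 rfl)
    ((add_right_inj_of_ne_top (mt (hv_top 1).1 one_ne_zero)).1 <| by
      rw [← hv_mul, one_mul, add_zero])
    hv_add hv_mul

section

variable {K : Type*} [Field K] (v : AddValuation K (WithTop ℝ)) {n : ℕ} {α : Fin n → K}
  {A : Fin n → ℝ} {σ : Equiv.Perm (Fin n)} {p : Fin n} {b c : K} {Xc : ℝ}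

theorem map_div_sub_eq_zero_of_lt (hA : ∀ i, v (α i) = A i) (hord : StrictMono fun j ↦ A (σ j))
    (hvb : v b = A (σ p)) (hvc : v c = Xc) (hX : A (σ p) < Xc) {j : Fin n} (hj : j < p) :
    v ((b - α (σ j)) / (c - α (σ j))) = 0 := by
  have hb : v (b - α (σ j)) = A (σ j) :=
    (v.map_sub_eq_of_lt_right (by rw [hA, hvb]; exact_mod_cast hord hj)).trans (hA _)
  have hc : v (c - α (σ j)) = A (σ j) :=
    (v.map_sub_eq_of_lt_right (by rw [hA, hvc]; exact_mod_cast (hord hj).trans hX)).trans (hA _)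
  rw [map_div, hb, hc, ← WithTop.LinearOrderedAddCommGroup.coe_sub, sub_self, WithTop.coe_zero]

theorem map_div_sub_eq_of_gt (hA : ∀ i, v (α i) = A i) (hvb : v b = A (σ p)) (hvc : v c = Xc)
    (hX : A (σ p) < Xc) {j : Fin n} (hXj : Xc < A (σ j)) :
    v ((b - α (σ j)) / (c - α (σ j))) = ↑(A (σ p) - Xc) := by
  have hb : v (b - α (σ j)) = A (σ p) :=
    (v.map_sub_eq_of_lt_left (by rw [hA, hvb]; exact_mod_cast hX.trans hXj)).trans hvb
  have hc : v (c - α (σ j)) = Xc :=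
    (v.map_sub_eq_of_lt_left (by rw [hA, hvc]; exact_mod_cast hXj)).trans hvc
  rw [map_div, hb, hc, WithTop.LinearOrderedAddCommGroup.coe_sub]

end

end AddValuation

/-- The indices are `0`-based: `σ j` plays the role of `i_{j+1}`, and `p : Fin n`
(with `p + 1 < n`) plays the role of the `1`-based index `p+1 ∈ {1,…,n-1}`;
accordingly the coefficient `n - p` (`1`-based) appears as `n - p - 1`. -/
theorem stmt_12_general (K : Type*) [Field K] (v : K → WithTop ℝ)
    (hv_top : ∀ x : K, v x = ⊤ ↔ x = 0)
    (hv_mul : ∀ x y : K, v (x * y) = v x + v y)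
    (hv_add : ∀ x y : K, min (v x) (v y) ≤ v (x + y))
    (n : ℕ)
    (α : Fin n → K) (A : Fin n → ℝ)
    (hA : ∀ i : Fin n, v (α i) = ((A i : ℝ) : WithTop ℝ))
    (σ : Equiv.Perm (Fin n))
    (hord : StrictMono fun j : Fin n => A (σ j))
    (p : Fin n) (hp : (p : ℕ) + 1 < n)
    (b c : K) (Xc : ℝ)
    (hprod : ∏ i : Fin n, (b - α i) = ∏ i : Fin n, (c - α i))
    (hvb : v b = ((A (σ p) : ℝ) : WithTop ℝ))
    (hvc : v c = ((Xc : ℝ) : WithTop ℝ))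
    (hX1 : A (σ p) < Xc) (hX2 : Xc < A (σ ⟨(p : ℕ) + 1, hp⟩))
    (B : Fin n → K) (hB : ∀ j : Fin n, B j = (b - α j) / (c - α j)) :
    (∀ j : Fin n, j < p → v (B (σ j)) = ((0 : ℝ) : WithTop ℝ)) ∧
    v (B (σ p)) = ((((n : ℝ) - (p : ℕ) - 1) * (Xc - A (σ p)) : ℝ) : WithTop ℝ) ∧
    (∀ j : Fin n, p < j → v (B (σ j)) = ((A (σ p) - Xc : ℝ) : WithTop ℝ)) ∧
    (∑ j : Fin n, v (B (σ j))) = ((0 : ℝ) : WithTop ℝ) := by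
  let w := AddValuation.ofField v hv_top hv_mul hv_add
  have hXgt : ∀ j, p < j → Xc < A (σ j) := fun j hj ↦
    hX2.trans_le (hord.monotone (Fin.mk_le_of_le_val hj))
  have hXne : ∀ i, v c ≠ v (α i) := fun i ↦ by
    rw [hvc, hA, ← σ.apply_symm_apply i, Ne, WithTop.coe_eq_coe]
    rcases le_or_gt (σ.symm i) p with hi | hi
    · exact ((hord.monotone hi).trans_lt hX1).ne'
    · exact (hXgt _ hi).ne
  have hsum : ∑ j, w ((b - α (σ j)) / (c - α (σ j))) = 0 :=
    (Equiv.sum_comp σ fun i ↦ w ((b - α i) / (c - α i))).trans <|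
      w.sum_map_div_eq_zero (fun i _ ↦ sub_ne_zero.2 fun h ↦ hXne i (congrArg v h)) hprod
  have hlt : ∀ j < p, w ((b - α (σ j)) / (c - α (σ j))) = 0 := fun j hj ↦
    w.map_div_sub_eq_zero_of_lt hA hord hvb hvc hX1 hj
  have hgt : ∀ j, p < j → w ((b - α (σ j)) / (c - α (σ j))) = ↑(A (σ p) - Xc) := fun j hj ↦
    w.map_div_sub_eq_of_gt hA hvb hvc hX1 (hXgt j hj)
  simp only [hB, WithTop.coe_zero]
  exact ⟨hlt, (Fin.apply_eq_of_sum_eq_zero hsum hlt hgt).trans (by rw [neg_sub]), hgt, hsum⟩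

/-- Valuations of `B_j = (b-α_j)/(c-α_j)` (Corollary 5.3 of the paper).
The indices are `0`-based: `σ j` plays the role of `i_{j+1}`, and `p : Fin n`
(with `p + 1 < n`) plays the role of the `1`-based index `p+1 ∈ {1,…,n-1}`;
accordingly the coefficient `n - p` (`1`-based) appears as `n - p - 1`. -/
theorem stmt_12 (K : Type*) [Field K] (v : K → WithTop ℝ)
    (hv_top : ∀ x : K, v x = ⊤ ↔ x = 0)
    (hv_mul : ∀ x y : K, v (x * y) = v x + v y)
    (hv_add : ∀ x y : K, min (v x) (v y) ≤ v (x + y))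
    (hv_eq : ∀ x y : K, v x ≠ v y → v (x + y) = min (v x) (v y))
    (n : ℕ) (hn : 2 ≤ n)
    (α : Fin n → K) (A : Fin n → ℝ)
    (hA : ∀ i : Fin n, v (α i) = ((A i : ℝ) : WithTop ℝ))
    (σ : Equiv.Perm (Fin n))
    (hord : StrictMono fun j : Fin n => A (σ j))
    (p : Fin n) (hp : (p : ℕ) + 1 < n)
    (b c : K) (Xc : ℝ)
    (hprod : ∏ i : Fin n, (b - α i) = ∏ i : Fin n, (c - α i))
    (hvb : v b = ((A (σ p) : ℝ) : WithTop ℝ))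
    (hvc : v c = ((Xc : ℝ) : WithTop ℝ))
    (hX1 : A (σ p) < Xc) (hX2 : Xc < A (σ ⟨(p : ℕ) + 1, hp⟩))
    (B : Fin n → K) (hB : ∀ j : Fin n, B j = (b - α j) / (c - α j)) :
    (∀ j : Fin n, j < p → v (B (σ j)) = ((0 : ℝ) : WithTop ℝ)) ∧
    v (B (σ p)) = ((((n : ℝ) - (p : ℕ) - 1) * (Xc - A (σ p)) : ℝ) : WithTop ℝ) ∧
    (∀ j : Fin n, p < j → v (B (σ j)) = ((A (σ p) - Xc : ℝ) : WithTop ℝ)) ∧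
    (∑ j : Fin n, v (B (σ j))) = ((0 : ℝ) : WithTop ℝ) :=
  stmt_12_general K v hv_top hv_mul hv_add n α A hA σ hord p hp b c Xc hprod hvb hvc hX1 hX2 B hB
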